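/- arXiv:2507.06630 — 3 statements merged into one kernel-verified Lean document; each statement's English description precedes it below -/
import Mathlib

section
/- For a differentiable vector field v: S² → ℝ³ and its tangential component v_τ := Pv, the surface strain rate tensors satisfy D_{S²}(v_τ) = D_{S²}(v) − (v·n)P on S². -/
open MeasureTheory Matrix
open scoped RealInnerProductSpace

noncomputable section

abbrev E3 : Type := EuclideanSpace ℝ (Fin 3)

def proj3 (y : E3) : Matrix (Fin 3) (Fin 3) ℝ :=
  Matrix.of fun i j => (if i = j then (1:ℝ) else 0) - y i * y j

def pd (f : E3 → ℝ) (x : E3) (i : Fin 3) : ℝ :=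
  fderiv ℝ f x (EuclideanSpace.single i 1)

def gradM (u : E3 → E3) (x : E3) : Matrix (Fin 3) (Fin 3) ℝ :=
  Matrix.of fun i j => fderiv ℝ (fun z => u z j) x (EuclideanSpace.single i 1)

def symM (A : Matrix (Fin 3) (Fin 3) ℝ) : Matrix (Fin 3) (Fin 3) ℝ :=
  (1/2 : ℝ) • (A + Aᵀ)

def tgradM (u : E3 → E3) (y : E3) : Matrix (Fin 3) (Fin 3) ℝ :=
  proj3 y * gradM u y

def strainS (u : E3 → E3) (y : E3) : Matrix (Fin 3) (Fin 3) ℝ :=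
  proj3 y * symM (tgradM u y) * proj3 y

def vE (v : E3 → E3) (x : E3) : E3 := ‖x‖ • v (‖x‖⁻¹ • x)

def ra (a : E3) : E3 → E3 := fun x => WithLp.toLp 2 (crossProduct a x)

def shell (ε : ℝ) : Set E3 := {x : E3 | 1 < ‖x‖ ∧ ‖x‖ < 1 + ε}

def sphM : Measure E3 := (Measure.hausdorffMeasure 2 : Measure E3).restrict (Metric.sphere (0:E3) 1)

def avg (ε : ℝ) (k : ℕ) (φ : E3 → ℝ) (y : E3) : ℝ :=
  (1/ε) * ∫ r in (1:ℝ)..(1+ε), φ (r • y) * r ^ k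

def avgV (ε : ℝ) (k : ℕ) (u : E3 → E3) (y : E3) : E3 :=
  WithLp.toLp 2 (fun j => (1/ε) * ∫ r in (1:ℝ)..(1+ε), u (r • y) j * r ^ k)

def div3 (u : E3 → E3) (x : E3) : ℝ :=
  ∑ i, fderiv ℝ (fun z => u z i) x (EuclideanSpace.single i 1)

def sdiv (F : E3 → E3) (y : E3) : ℝ :=
  ∑ j, ∑ i, proj3 y j i * fderiv ℝ (fun x => F (‖x‖⁻¹ • x) j) y (EuclideanSpace.single i 1)

def frob2 (A : Matrix (Fin 3) (Fin 3) ℝ) : ℝ := ∑ i, ∑ j, (A i j)^2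


/-! The normal part `⟪v z, z⟫ • z` contributes `-(∇⟪v, ·⟫ ⊗ n) - (v·n) I` to the gradient of `v_τ`.
Every row of the rank-one term is a multiple of `n`, so it is killed by the projection on the right,
and its transpose by the projection on the left; the identity term leaves `-(v·n) P` after
sandwiching, because `P` is a symmetric idempotent. -/

lemma proj3_eq_one_sub_vecMulVec (y : E3) : proj3 y = 1 - vecMulVec ⇑y ⇑y := by
  ext i j
  simp [proj3, vecMulVec_apply, one_apply]

lemma proj3_transpose (y : E3) : (proj3 y)ᵀ = proj3 y := by
  rw [proj3_eq_one_sub_vecMulVec, transpose_sub, transpose_one, transpose_vecMulVec]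

lemma dotProduct_self_eq_one {y : E3} (hy : ‖y‖ = 1) : ⇑y ⬝ᵥ ⇑y = 1 := by
  have h := real_inner_self_eq_norm_sq y
  rw [hy, EuclideanSpace.inner_eq_star_dotProduct] at h
  simpa using h

lemma vecMulVec_mul_proj3 (w : Fin 3 → ℝ) {y : E3} (hy : ‖y‖ = 1) :
    vecMulVec w ⇑y * proj3 y = 0 := by
  rw [proj3_eq_one_sub_vecMulVec, Matrix.mul_sub, Matrix.mul_one, vecMulVec_mul_vecMulVec,
    dotProduct_self_eq_one hy, one_smul, sub_self]

lemma proj3_mul_self {y : E3} (hy : ‖y‖ = 1) : proj3 y * proj3 y = proj3 y := by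
  nth_rw 1 [proj3_eq_one_sub_vecMulVec y]
  rw [Matrix.sub_mul, Matrix.one_mul, vecMulVec_mul_proj3 _ hy, sub_zero]

lemma symM_add (A B : Matrix (Fin 3) (Fin 3) ℝ) : symM (A + B) = symM A + symM B := by
  simp only [symM, transpose_add, ← smul_add]
  abel_nf

lemma symM_sub (A B : Matrix (Fin 3) (Fin 3) ℝ) : symM (A - B) = symM A - symM B := by
  simp only [symM, transpose_sub, ← smul_sub]
  abel_nf

lemma symM_smul (c : ℝ) (A : Matrix (Fin 3) (Fin 3) ℝ) : symM (c • A) = c • symM A := by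
  simp only [symM, transpose_smul, ← smul_add, smul_comm c]

lemma symM_of_transpose_eq {A : Matrix (Fin 3) (Fin 3) ℝ} (hA : Aᵀ = A) : symM A = A := by
  rw [symM, hA, ← two_smul ℝ A, smul_smul]
  norm_num

lemma mul_symM_mul_mul_eq_zero {P A : Matrix (Fin 3) (Fin 3) ℝ} (hP : Pᵀ = P) (hAP : A * P = 0) :
    P * symM (P * A) * P = 0 := by
  have hPA : P * Aᵀ = 0 := by rw [← hP, ← transpose_mul, hAP, transpose_zero]
  have h₁ : P * (P * A) * P = 0 := by
    rw [Matrix.mul_assoc, Matrix.mul_assoc, hAP, Matrix.mul_zero, Matrix.mul_zero]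
  have h₂ : P * (Aᵀ * P) * P = 0 := by
    rw [← Matrix.mul_assoc, hPA, Matrix.zero_mul, Matrix.zero_mul]
  rw [symM, transpose_mul, hP, Matrix.mul_smul, Matrix.smul_mul, Matrix.mul_add, Matrix.add_mul,
    h₁, h₂, add_zero, smul_zero]

lemma gradM_sub {u u' : E3 → E3} {x : E3} (hu : DifferentiableAt ℝ u x)
    (hu' : DifferentiableAt ℝ u' x) :
    gradM (fun z => u z - u' z) x = gradM u x - gradM u' x := by
  ext i j
  exact congrArg (· (EuclideanSpace.single i 1))
    (fderiv_fun_sub (differentiableAt_euclidean.1 hu j) (differentiableAt_euclidean.1 hu' j))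

lemma gradM_smul_self {φ : E3 → ℝ} {x : E3} (hφ : DifferentiableAt ℝ φ x) :
    gradM (fun z => φ z • z) x = vecMulVec (pd φ x) ⇑x + φ x • 1 := by
  ext i j
  have hcoord : HasFDerivAt (fun z : E3 => z j) (EuclideanSpace.proj j : E3 →L[ℝ] ℝ) x :=
    (EuclideanSpace.proj j : E3 →L[ℝ] ℝ).hasFDerivAt
  simp only [gradM, PiLp.smul_apply, smul_eq_mul, of_apply,
    fderiv_fun_mul hφ hcoord.differentiableAt, hcoord.fderiv]
  simp only [_root_.add_apply, _root_.smul_apply, PiLp.proj_apply,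
    PiLp.single_apply, eq_comm, smul_eq_mul, mul_ite, mul_one, mul_zero, Matrix.add_apply,
    vecMulVec_apply, pd, Matrix.smul_apply, one_apply]
  ring

/-- `D_{S²}(v_τ) = D_{S²}(v) − (v·n) P` on `S²`, where `v_τ = Pv`
(realized via the extension `z ↦ v z − ⟪v z, z⟫ z`). -/
theorem stmt3 (v : E3 → E3) (y : E3) (hy : ‖y‖ = 1)
    (hv : DifferentiableAt ℝ v y) :
    strainS (fun z => v z - ⟪v z, z⟫ • z) y
      = strainS v y - ⟪v y, y⟫ • proj3 y := by
  have hφ : DifferentiableAt ℝ (fun z => ⟪v z, z⟫) y := hv.inner ℝ differentiableAt_id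
  have hgrad := gradM_sub (u' := fun z => ⟪v z, z⟫ • z) hv (hφ.smul differentiableAt_id)
  rw [gradM_smul_self hφ] at hgrad
  simp only [strainS, tgradM, hgrad, Matrix.mul_sub, Matrix.mul_add, Matrix.mul_smul,
    Matrix.mul_one, symM_sub, symM_add, symM_smul, symM_of_transpose_eq (proj3_transpose y),
    Matrix.sub_mul, Matrix.add_mul, Matrix.smul_mul,
    mul_symM_mul_mul_eq_zero (proj3_transpose y) (vecMulVec_mul_proj3 _ hy), proj3_mul_self hy,
    zero_add]
end
end

section
/- Let v be a tangential differentiable vector field on S² (v·n = 0) and v_E(x) := |x| v(x/|x|) its weighted extension. Then the strain rate tensor satisfies D(v_E)(x) = (D_{S²}(v))(x/|x|) for all x ∈ ℝ³ \ {0}. -/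
open MeasureTheory Matrix
open scoped RealInnerProductSpace

noncomputable section

/-!
Write `y = x / ‖x‖` and `P = I - y yᵀ`. The derivative of `x ↦ x / ‖x‖` is `P / ‖x‖`, and the
weight `‖x‖` cancels the factor `1 / ‖x‖`, so `∇v_E(x) = y ⊗ v(y) + W` with `W = P ∇v(y)`.
Differentiating the tangency relation `⟪v(z/‖z‖), z/‖z‖⟫ = 0` gives `W y = -v(y)`, and
`yᵀ W = 0` because `yᵀ P = 0`. These two identities and `v(y) ⊥ y` make `P (W + Wᵀ) P`
equal to the symmetric part of `y ⊗ v(y) + W`.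
-/

section Normalize

variable {F G : Type*} [NormedAddCommGroup F] [InnerProductSpace ℝ F]
  [NormedAddCommGroup G] [NormedSpace ℝ G]

def tangentProj (y : F) : F →L[ℝ] F :=
  ContinuousLinearMap.id ℝ F - (innerSL ℝ y).smulRight y

theorem tangentProj_apply (y h : F) : tangentProj y h = h - ⟪y, h⟫ • y := rfl

theorem hasFDerivAt_norm_of_ne_zero {x : F} (hx : x ≠ 0) :
    HasFDerivAt (‖·‖) (innerSL ℝ (‖x‖⁻¹ • x)) x := by
  have h := (hasStrictFDerivAt_norm_sq x).hasFDerivAt.sqrt (by positivity)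
  simp only [Real.sqrt_sq (norm_nonneg _)] at h
  refine h.congr_fderiv (ContinuousLinearMap.ext fun h => ?_)
  simp only [one_div, _root_.mul_inv_rev, _root_.smul_apply, coe_innerSL_apply, nsmul_eq_mul,
    Nat.cast_ofNat, smul_eq_mul, map_smul]
  field_simp

theorem hasFDerivAt_normalize {x : F} (hx : x ≠ 0) :
    HasFDerivAt (fun z : F => ‖z‖⁻¹ • z) (‖x‖⁻¹ • tangentProj (‖x‖⁻¹ • x)) x := by
  have hn : ‖x‖ ≠ 0 := norm_ne_zero_iff.mpr hx
  refine (((hasDerivAt_inv hn).comp_hasFDerivAt x (hasFDerivAt_norm_of_ne_zero hx)).smul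
    (hasFDerivAt_id x)).congr_fderiv (ContinuousLinearMap.ext fun h => ?_)
  simp only [Function.comp_apply, map_smul, smul_smul, neg_mul, neg_smul, id_eq, _root_.add_apply,
    _root_.smul_apply, ContinuousLinearMap.id_apply, ContinuousLinearMap.smulRight_apply,
    _root_.neg_apply, coe_innerSL_apply, smul_eq_mul, tangentProj_apply, real_inner_smul_left,
    smul_sub]
  module

theorem hasFDerivAt_norm_smul_comp_normalize {v : F → G} {L : F →L[ℝ] G} {x : F}
    (hx : x ≠ 0) (hv : HasFDerivAt v L (‖x‖⁻¹ • x)) :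
    HasFDerivAt (fun z : F => ‖z‖ • v (‖z‖⁻¹ • z))
      ((innerSL ℝ (‖x‖⁻¹ • x)).smulRight (v (‖x‖⁻¹ • x)) +
        L.comp (tangentProj (‖x‖⁻¹ • x))) x := by
  have hn : ‖x‖ ≠ 0 := norm_ne_zero_iff.mpr hx
  have hcomp := hv.comp (f := fun z : F => ‖z‖⁻¹ • z) x (hasFDerivAt_normalize hx)
  refine ((hasFDerivAt_norm_of_ne_zero hx).smul hcomp).congr_fderiv ?_
  rw [ContinuousLinearMap.comp_smul, smul_smul, mul_inv_cancel₀ hn, one_smul, add_comm]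
  rfl

theorem inner_apply_tangentProj_eq_neg_of_tangent {v : F → F} {L : F →L[ℝ] F} {y : F}
    (hy : ‖y‖ = 1) (hv : HasFDerivAt v L y) (hvt : ∀ z : F, ‖z‖ = 1 → ⟪v z, z⟫ = 0) (h : F) :
    ⟪L (tangentProj y h), y⟫ = -⟪v y, h⟫ := by
  have hy0 : y ≠ 0 := norm_ne_zero_iff.mp (by rw [hy]; exact one_ne_zero)
  have hnormalize : HasFDerivAt (fun z : F => ‖z‖⁻¹ • z) (tangentProj y) y := by
    simpa [hy] using hasFDerivAt_normalize hy0
  have hy' : ‖y‖⁻¹ • y = y := by simp [hy]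
  have hvn : HasFDerivAt (fun z => v (‖z‖⁻¹ • z)) (L.comp (tangentProj y)) y :=
    HasFDerivAt.comp (f := fun z : F => ‖z‖⁻¹ • z) y (by rwa [hy']) hnormalize
  have hzero : (fun z : F => ⟪v (‖z‖⁻¹ • z), ‖z‖⁻¹ • z⟫) =ᶠ[nhds y] fun _ => 0 := by
    filter_upwards [isOpen_ne.mem_nhds hy0] with z hz
    exact hvt _ (norm_smul_inv_norm hz)
  have h0 := congrArg (· h)
    (((hvn.inner ℝ hnormalize).congr_of_eventuallyEq hzero.symm).unique (hasFDerivAt_const 0 y))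
  simp only [ContinuousLinearMap.comp_apply, ContinuousLinearMap.prod_apply, fderivInnerCLM_apply,
    hy', FunLike.coe_zero, Pi.zero_apply, tangentProj_apply y h, inner_sub_right,
    real_inner_smul_right, hvt y hy, mul_zero, sub_zero] at h0
  rw [tangentProj_apply]
  linarith

end Normalize

section EuclideanMatrix

variable {ι : Type*} [Fintype ι] [DecidableEq ι]

theorem toMatrix_innerSL_smulRight (y w : EuclideanSpace ℝ ι) :
    LinearMap.toMatrix (EuclideanSpace.basisFun ι ℝ).toBasis (EuclideanSpace.basisFun ι ℝ).toBasis
      ((innerSL ℝ y).smulRight w : EuclideanSpace ℝ ι →ₗ[ℝ] EuclideanSpace ℝ ι) =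
      vecMulVec w.ofLp y.ofLp := by
  ext i j
  simp [LinearMap.toMatrix_apply, vecMulVec_apply, EuclideanSpace.inner_single_right,
    mul_comm]

theorem toMatrix_tangentProj (y : EuclideanSpace ℝ ι) :
    LinearMap.toMatrix (EuclideanSpace.basisFun ι ℝ).toBasis (EuclideanSpace.basisFun ι ℝ).toBasis
      (tangentProj y : EuclideanSpace ℝ ι →ₗ[ℝ] EuclideanSpace ℝ ι) =
      1 - vecMulVec y.ofLp y.ofLp := by
  rw [tangentProj, ContinuousLinearMap.toLinearMap_sub, map_sub, ContinuousLinearMap.coe_id,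
    LinearMap.toMatrix_id, toMatrix_innerSL_smulRight]

theorem transpose_toMatrix_mulVec (L : EuclideanSpace ℝ ι →ₗ[ℝ] EuclideanSpace ℝ ι)
    (y : EuclideanSpace ℝ ι) :
    (LinearMap.toMatrix (EuclideanSpace.basisFun ι ℝ).toBasis
      (EuclideanSpace.basisFun ι ℝ).toBasis L)ᵀ *ᵥ y.ofLp =
      fun i => ⟪L (EuclideanSpace.single i 1), y⟫ := by
  ext i
  simp [LinearMap.toMatrix_apply, mulVec, dotProduct, PiLp.inner_apply, mul_comm]

end EuclideanMatrix

theorem one_sub_vecMulVec_mul_add_transpose_mul {n R : Type*} [Fintype n] [DecidableEq n]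
    [CommRing R] {W : Matrix n n R} {y w : n → R} (hWy : W *ᵥ y = -w) (hyW : y ᵥ* W = 0)
    (hwy : w ⬝ᵥ y = 0) :
    (1 - vecMulVec y y) * (W + Wᵀ) * (1 - vecMulVec y y) =
      vecMulVec y w + W + (vecMulVec y w + W)ᵀ := by
  set S := W + Wᵀ with hS
  have hSy : S *ᵥ y = -w := by simp [S, add_mulVec, mulVec_transpose, hWy, hyW]
  have hyS : y ᵥ* S = -w := by simp [S, vecMul_add, vecMul_transpose, hWy, hyW]
  have hexpand : (1 - vecMulVec y y) * S * (1 - vecMulVec y y) =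
      S - vecMulVec y y * S - S * vecMulVec y y + vecMulVec y y * S * vecMulVec y y := by
    noncomm_ring
  rw [hexpand, vecMulVec_mul, hyS, mul_vecMulVec, hSy, vecMulVec_mul_vecMulVec, neg_dotProduct,
    hwy, neg_zero, zero_smul, transpose_add, transpose_vecMulVec,
    vecMulVec_neg, neg_vecMulVec, vecMulVec_zero, hS]
  abel

theorem gradM_eq_transpose_toMatrix {u : E3 → E3} {L : E3 →L[ℝ] E3} {x : E3}
    (h : HasFDerivAt u L x) :
    gradM u x = (LinearMap.toMatrix (EuclideanSpace.basisFun (Fin 3) ℝ).toBasis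
      (EuclideanSpace.basisFun (Fin 3) ℝ).toBasis (L : E3 →ₗ[ℝ] E3))ᵀ := by
  ext i j
  have hj : HasFDerivAt (fun z => u z j) ((EuclideanSpace.proj j).comp L) x :=
    (EuclideanSpace.proj (𝕜 := ℝ) j).hasFDerivAt.comp x h
  simp [gradM, hj.fderiv, LinearMap.toMatrix_apply]

theorem proj3_eq (y : E3) : proj3 y = 1 - vecMulVec y.ofLp y.ofLp := by
  ext i j
  simp [proj3, one_apply, vecMulVec_apply]

theorem vecMul_proj3_of_norm_eq_one {y : E3} (hy : ‖y‖ = 1) : y.ofLp ᵥ* proj3 y = 0 := by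
  have hyy : y.ofLp ⬝ᵥ y.ofLp = 1 := by
    have := real_inner_self_eq_norm_sq y
    rw [hy, EuclideanSpace.inner_eq_star_dotProduct] at this
    simpa using this
  rw [proj3_eq, vecMul_sub, vecMul_one, vecMul_vecMulVec, hyy, one_smul, sub_self]

theorem tgradM_eq_transpose_toMatrix {v : E3 → E3} {L : E3 →L[ℝ] E3} {y : E3}
    (hv : HasFDerivAt v L y) :
    tgradM v y = (LinearMap.toMatrix (EuclideanSpace.basisFun (Fin 3) ℝ).toBasis
      (EuclideanSpace.basisFun (Fin 3) ℝ).toBasis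
      (L.comp (tangentProj y) : E3 →ₗ[ℝ] E3))ᵀ := by
  rw [tgradM, gradM_eq_transpose_toMatrix hv, ContinuousLinearMap.toLinearMap_comp,
    LinearMap.toMatrix_comp _ (EuclideanSpace.basisFun (Fin 3) ℝ).toBasis, transpose_mul,
    toMatrix_tangentProj, proj3_eq]
  simp only [transpose_sub, transpose_one, transpose_vecMulVec]

theorem gradM_vE {v : E3 → E3} {x : E3} (hx : x ≠ 0)
    (hv : DifferentiableAt ℝ v (‖x‖⁻¹ • x)) :
    gradM (vE v) x =
      vecMulVec (‖x‖⁻¹ • x).ofLp (v (‖x‖⁻¹ • x)).ofLp + tgradM v (‖x‖⁻¹ • x) := by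
  rw [gradM_eq_transpose_toMatrix (u := vE v)
      (hasFDerivAt_norm_smul_comp_normalize hx hv.hasFDerivAt),
    tgradM_eq_transpose_toMatrix hv.hasFDerivAt, ContinuousLinearMap.toLinearMap_add, map_add,
    transpose_add, toMatrix_innerSL_smulRight, transpose_vecMulVec]

theorem tgradM_mulVec_self {v : E3 → E3} {y : E3} (hy : ‖y‖ = 1) (hv : DifferentiableAt ℝ v y)
    (hvt : ∀ z : E3, ‖z‖ = 1 → ⟪v z, z⟫ = 0) :
    tgradM v y *ᵥ y.ofLp = -(v y).ofLp := by
  rw [tgradM_eq_transpose_toMatrix hv.hasFDerivAt, transpose_toMatrix_mulVec]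
  ext i
  simp [inner_apply_tangentProj_eq_neg_of_tangent hy hv.hasFDerivAt hvt,
    EuclideanSpace.inner_single_right]

theorem vecMul_tgradM {v : E3 → E3} {y : E3} (hy : ‖y‖ = 1) : y.ofLp ᵥ* tgradM v y = 0 := by
  rw [tgradM, ← vecMul_vecMul, vecMul_proj3_of_norm_eq_one hy, zero_vecMul]

/-- For tangential `v` on `S²`, the strain rate tensor of the weighted extension
satisfies `D(v_E)(x) = (D_{S²}(v))(x/|x|)`. -/
theorem stmt9 (v : E3 → E3) (x : E3) (hx : x ≠ 0)
    (hv : DifferentiableAt ℝ v (‖x‖⁻¹ • x))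
    (hvt : ∀ z : E3, ‖z‖ = 1 → ⟪v z, z⟫ = 0) :
    symM (gradM (vE v) x) = strainS v (‖x‖⁻¹ • x) := by
  set y := ‖x‖⁻¹ • x
  have hy : ‖y‖ = 1 := norm_smul_inv_norm hx
  have hvy : (v y).ofLp ⬝ᵥ y.ofLp = 0 := by
    simpa [EuclideanSpace.inner_eq_star_dotProduct, dotProduct_comm] using hvt y hy
  rw [gradM_vE hx hv, strainS, symM, symM, proj3_eq, Matrix.mul_smul, Matrix.smul_mul,
    one_sub_vecMulVec_mul_add_transpose_mul (tgradM_mulVec_self hy hv hvt) (vecMul_tgradM hy)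
      hvy]
end
end

section
/- Let ε ∈ (0,1) and k ∈ ℤ_{≥0}. For φ ∈ H¹(Ω_ε), the constant extension of the weighted average satisfies ‖φ − (M_ε^k φ)⁻‖_{L²(Ω_ε)} ≤ c ε ‖φ‖_{H¹(Ω_ε)}, where (M_ε^k φ)⁻(x) := (M_ε^k φ)(x/|x|) and c depends only on k. -/
open MeasureTheory Matrix
open scoped RealInnerProductSpace

noncomputable section

/-!
Along each ray `r ↦ φ (r • y)`, `1 < r < 1 + ε`, the fundamental theorem of calculus together
with `|1 - r ^ k| ≤ k 2ᵏ ε` bounds the deviation of `φ (r • y)` from its weighted mean by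
`∫ |∂ᵣφ| + k 2ᵏ ∫ |φ|` over the ray, and Jensen's inequality turns the square of this into
`ε` times the radial `L²` norms; one more factor `ε` comes from the length of the ray.
Integrating over the unit sphere in polar coordinates gives the estimate on the shell.
-/

open Set Metric Module

section Polar

variable {E : Type*} [NormedAddCommGroup E] [NormedSpace ℝ E]

def radialIntegral (f : E → ℝ) (y : sphere (0 : E) 1) : ℝ :=
  ∫ r in Ioi (0 : ℝ), r ^ (finrank ℝ E - 1) * f (r • (y : E))

lemma integral_volumeIoiPow (n : ℕ) (g : ℝ → ℝ) :
    ∫ r, g r ∂(Measure.volumeIoiPow n) = ∫ r in Ioi (0 : ℝ), r ^ n * g r := by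
  rw [Measure.volumeIoiPow, integral_withDensity_eq_integral_toReal_smul
    (by fun_prop) (.of_forall fun _ => ENNReal.ofReal_lt_top),
    integral_subtype_comap measurableSet_Ioi (fun r => (ENNReal.ofReal (r ^ n)).toReal • g r)]
  refine setIntegral_congr_fun measurableSet_Ioi fun r hr => ?_
  rw [ENNReal.toReal_ofReal (pow_nonneg (le_of_lt hr) n), smul_eq_mul]

lemma integral_homeomorphUnitSphereProd_symm_eq_radialIntegral (f : E → ℝ)
    (y : sphere (0 : E) 1) :
    ∫ r, f ((homeomorphUnitSphereProd E).symm (y, r)) ∂(Measure.volumeIoiPow (finrank ℝ E - 1))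
      = radialIntegral f y := by
  simp only [homeomorphUnitSphereProd_symm_apply_coe]
  exact integral_volumeIoiPow _ fun r => f (r • (y : E))

variable [FiniteDimensional ℝ E] [MeasurableSpace E] [BorelSpace E]
  (μ : Measure E) [μ.IsAddHaarMeasure]

lemma integrable_comp_homeomorphUnitSphereProd_symm {f : E → ℝ} (hf : Integrable f μ) :
    Integrable (fun p => f ((homeomorphUnitSphereProd E).symm p))
      (μ.toSphere.prod (Measure.volumeIoiPow (finrank ℝ E - 1))) := by
  have hf' : IntegrableOn f {0}ᶜ μ := hf.integrableOn
  rw [integrableOn_iff_comap_subtypeVal (measurableSet_singleton 0).compl] at hf'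
  rw [← μ.measurePreserving_homeomorphUnitSphereProd.integrable_comp_emb
    (Homeomorph.measurableEmbedding _)]
  simpa only [Function.comp_def, Homeomorph.symm_apply_apply] using hf'

lemma integrable_radialIntegral {f : E → ℝ} (hf : Integrable f μ) :
    Integrable (radialIntegral f) μ.toSphere := by
  simpa only [integral_homeomorphUnitSphereProd_symm_eq_radialIntegral] using
    (integrable_comp_homeomorphUnitSphereProd_symm μ hf).integral_prod_left

variable [Nontrivial E]

lemma integral_eq_integral_comp_homeomorphUnitSphereProd_symm (f : E → ℝ) :
    ∫ x, f x ∂μ = ∫ p, f ((homeomorphUnitSphereProd E).symm p)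
      ∂(μ.toSphere.prod (Measure.volumeIoiPow (finrank ℝ E - 1))) := by
  rw [← μ.measurePreserving_homeomorphUnitSphereProd.integral_comp
    (Homeomorph.measurableEmbedding _), ← restrict_compl_singleton (μ := μ) 0,
    ← integral_subtype_comap (measurableSet_singleton 0).compl]
  simp

lemma integral_eq_integral_radialIntegral {f : E → ℝ} (hf : Integrable f μ) :
    ∫ x, f x ∂μ = ∫ y, radialIntegral f y ∂μ.toSphere := by
  simp only [integral_eq_integral_comp_homeomorphUnitSphereProd_symm μ f,
    integral_prod _ (integrable_comp_homeomorphUnitSphereProd_symm μ hf),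
    integral_homeomorphUnitSphereProd_symm_eq_radialIntegral]

lemma integral_le_integral_of_radialIntegral_le {F G : E → ℝ} (hG : Integrable G μ)
    (hG₀ : 0 ≤ ∫ x, G x ∂μ) (h : ∀ y, radialIntegral F y ≤ radialIntegral G y) :
    ∫ x, F x ∂μ ≤ ∫ x, G x ∂μ := by
  by_cases hF : Integrable F μ
  · rw [integral_eq_integral_radialIntegral μ hF, integral_eq_integral_radialIntegral μ hG]
    exact integral_mono (integrable_radialIntegral μ hF) (integrable_radialIntegral μ hG) h
  · rwa [integral_undef hF]

end Polar

section Interval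

variable {f g : ℝ → ℝ} {a b : ℝ}

lemma abs_sub_le_setIntegral_abs_deriv (hd : ∀ t, HasDerivAt f (g t) t) (hg : Continuous g)
    {r s : ℝ} (hr : r ∈ Icc a b) (hs : s ∈ Icc a b) :
    |f s - f r| ≤ ∫ t in Ioc a b, |g t| := by
  rw [← intervalIntegral.integral_eq_sub_of_hasDerivAt (fun t _ => hd t)
    (hg.intervalIntegrable r s)]
  calc |∫ t in r..s, g t| ≤ ∫ t in uIoc r s, |g t| := by
        simpa only [Real.norm_eq_abs] using
          intervalIntegral.norm_integral_le_integral_norm_uIoc (f := g)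
    _ ≤ ∫ t in Ioc a b, |g t| :=
        setIntegral_mono_set hg.abs.integrableOn_Ioc (.of_forall fun t => abs_nonneg _)
          (Ioc_subset_Ioc (le_min hr.1 hs.1) (max_le hr.2 hs.2)).eventuallyLE

lemma sq_setIntegral_abs_le (hab : a < b) (hg : Continuous g) :
    (∫ t in Ioc a b, |g t|) ^ 2 ≤ (b - a) * ∫ t in Ioc a b, g t ^ 2 := by
  have hba : 0 < b - a := sub_pos.2 hab
  have hjensen := (convexOn_pow 2).map_set_average_le (μ := volume) (t := Ioc a b)
    (f := fun t => |g t|) (continuous_pow 2).continuousOn isClosed_Ici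
    (by simp [Real.volume_Ioc, hab]) (by simp [Real.volume_Ioc])
    (.of_forall fun t => abs_nonneg (g t)) hg.abs.integrableOn_Ioc
    ((hg.abs.pow 2).integrableOn_Ioc (a := a) (b := b))
  have hvol : volume.real (Ioc a b) = b - a := by
    simp [Measure.real, Real.volume_Ioc, hab.le]
  simp only [setAverage_eq, hvol, smul_eq_mul, sq_abs, mul_pow] at hjensen
  have := mul_le_mul_of_nonneg_left hjensen (sq_nonneg (b - a))
  field_simp at this
  linarith

end Interval

def radialMean (ε : ℝ) (k : ℕ) (f : ℝ → ℝ) : ℝ :=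
  (1 / ε) * ∫ r in (1 : ℝ)..(1 + ε), f r * r ^ k

def shellConst (k : ℕ) : ℝ := 8 * (1 + (k * 2 ^ k) ^ 2)

lemma shellConst_pos (k : ℕ) : 0 < shellConst k := by
  unfold shellConst; positivity

lemma abs_one_sub_pow_le {ε r : ℝ} (k : ℕ) (hε : ε ≤ 1) (hr : r ∈ Icc 1 (1 + ε)) :
    |1 - r ^ k| ≤ k * 2 ^ k * ε := by
  have hε₀ : 0 ≤ ε := by linarith [hr.1, hr.2]
  have hr₁ : |r - 1| ≤ ε := by rw [abs_of_nonneg (by linarith [hr.1])]; linarith [hr.2]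
  have hmax : max |r| |1| ^ (k - 1) ≤ 2 ^ k := by
    rw [abs_one, abs_of_nonneg (by linarith [hr.1]), max_eq_left hr.1]
    exact (pow_le_pow_left₀ (by linarith [hr.1]) (by linarith [hr.2]) _).trans
      (pow_le_pow_right₀ one_le_two (Nat.sub_le k 1))
  calc |1 - r ^ k| = |r ^ k - 1 ^ k| := by rw [one_pow, abs_sub_comm]
    _ ≤ |r - 1| * k * max |r| |1| ^ (k - 1) := abs_pow_sub_pow_le r 1 k
    _ ≤ ε * k * 2 ^ k := by gcongr
    _ = k * 2 ^ k * ε := by ring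

section RadialMean

variable {f g : ℝ → ℝ} {ε : ℝ}

lemma abs_sub_radialMean_le (k : ℕ) (hε : 0 < ε) (hε1 : ε ≤ 1)
    (hd : ∀ t, HasDerivAt f (g t) t) (hg : Continuous g) {s : ℝ} (hs : s ∈ Icc 1 (1 + ε)) :
    |f s - radialMean ε k f|
      ≤ (∫ t in Ioc 1 (1 + ε), |g t|) + k * 2 ^ k * ∫ t in Ioc 1 (1 + ε), |f t| := by
  have hf : Continuous f := continuous_iff_continuousAt.2 fun t => (hd t).continuousAt
  have h1ε : (1 : ℝ) ≤ 1 + ε := by linarith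
  set D := ∫ t in Ioc 1 (1 + ε), |g t|
  set K : ℝ := k * 2 ^ k
  have hbound : ∀ r ∈ Icc 1 (1 + ε), |f s - f r * r ^ k| ≤ D + K * ε * |f r| := by
    intro r hr
    calc |f s - f r * r ^ k| = |(f s - f r) + f r * (1 - r ^ k)| := by ring_nf
      _ ≤ |f s - f r| + |f r| * |1 - r ^ k| := (abs_add_le _ _).trans_eq (by rw [abs_mul])
      _ ≤ D + |f r| * (K * ε) := by
          gcongr
          exacts [abs_sub_le_setIntegral_abs_deriv hd hg hr hs, abs_one_sub_pow_le k hε1 hr]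
      _ = D + K * ε * |f r| := by ring
  have hsplit :
      f s - radialMean ε k f = (1 / ε) * ∫ r in (1 : ℝ)..(1 + ε), (f s - f r * r ^ k) := by
    rw [intervalIntegral.integral_sub intervalIntegrable_const
      ((show Continuous fun r => f r * r ^ k by fun_prop).intervalIntegrable _ _),
      intervalIntegral.integral_const, radialMean]
    field_simp
    ring
  calc |f s - radialMean ε k f|
      ≤ (1 / ε) * ∫ r in (1 : ℝ)..(1 + ε), (D + K * ε * |f r|) := by
        rw [hsplit, abs_mul, abs_of_pos (by positivity)]
        gcongr
        refine (intervalIntegral.abs_integral_le_integral_abs h1ε).trans ?_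
        exact intervalIntegral.integral_mono_on h1ε
          ((continuous_const.sub (hf.mul (continuous_pow k))).abs.intervalIntegrable _ _)
          ((continuous_const.add (continuous_const.mul hf.abs)).intervalIntegrable _ _) hbound
    _ = D + K * ∫ t in Ioc 1 (1 + ε), |f t| := by
        rw [intervalIntegral.integral_add intervalIntegrable_const
          ((show Continuous fun r => K * ε * |f r| by fun_prop).intervalIntegrable _ _),
          intervalIntegral.integral_const,
          intervalIntegral.integral_const_mul, intervalIntegral.integral_of_le h1ε]
        field_simp
        ring

lemma sq_sub_radialMean_le (k : ℕ) (hε : 0 < ε) (hε1 : ε ≤ 1)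
    (hd : ∀ t, HasDerivAt f (g t) t) (hg : Continuous g) {s : ℝ} (hs : s ∈ Icc 1 (1 + ε)) :
    (f s - radialMean ε k f) ^ 2
      ≤ 2 * (1 + (k * 2 ^ k) ^ 2) * ε * ∫ t in Ioc 1 (1 + ε), (f t ^ 2 + g t ^ 2) := by
  have hf : Continuous f := continuous_iff_continuousAt.2 fun t => (hd t).continuousAt
  have hlt : (1 : ℝ) < 1 + ε := by linarith
  have hD := sq_setIntegral_abs_le hlt hg
  have hM := sq_setIntegral_abs_le hlt hf
  rw [add_sub_cancel_left] at hD hM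
  have hDf := abs_sub_radialMean_le k hε hε1 hd hg hs
  rw [integral_add (show Continuous fun t => f t ^ 2 by fun_prop).integrableOn_Ioc
    (show Continuous fun t => g t ^ 2 by fun_prop).integrableOn_Ioc]
  set D := ∫ t in Ioc 1 (1 + ε), |g t|
  set M := ∫ t in Ioc 1 (1 + ε), |f t|
  set K : ℝ := k * 2 ^ k
  have hD₀ : 0 ≤ D := setIntegral_nonneg measurableSet_Ioc fun _ _ => abs_nonneg _
  have hM₀ : 0 ≤ M := setIntegral_nonneg measurableSet_Ioc fun _ _ => abs_nonneg _
  have hIf : 0 ≤ ∫ t in Ioc 1 (1 + ε), f t ^ 2 :=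
    setIntegral_nonneg measurableSet_Ioc fun _ _ => sq_nonneg _
  have hIg : 0 ≤ ∫ t in Ioc 1 (1 + ε), g t ^ 2 :=
    setIntegral_nonneg measurableSet_Ioc fun _ _ => sq_nonneg _
  calc (f s - radialMean ε k f) ^ 2 ≤ (D + K * M) ^ 2 := sq_le_sq.2 (hDf.trans (le_abs_self _))
    _ ≤ 2 * D ^ 2 + 2 * K ^ 2 * M ^ 2 := by nlinarith [sq_nonneg (D - K * M)]
    _ ≤ 2 * (ε * ∫ t in Ioc 1 (1 + ε), g t ^ 2)
          + 2 * K ^ 2 * (ε * ∫ t in Ioc 1 (1 + ε), f t ^ 2) := by gcongr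
    _ ≤ _ := by nlinarith [sq_nonneg K]

lemma setIntegral_sq_sub_radialMean_le (k : ℕ) (hε : 0 < ε) (hε1 : ε ≤ 1)
    (hd : ∀ t, HasDerivAt f (g t) t) (hg : Continuous g) :
    ∫ s in Ioc 1 (1 + ε), s ^ 2 * (f s - radialMean ε k f) ^ 2
      ≤ shellConst k * ε ^ 2 * ∫ s in Ioc 1 (1 + ε), s ^ 2 * (f s ^ 2 + g s ^ 2) := by
  have hf : Continuous f := continuous_iff_continuousAt.2 fun t => (hd t).continuousAt
  set B := 2 * (1 + (k * 2 ^ k : ℝ) ^ 2) * ε * ∫ t in Ioc 1 (1 + ε), (f t ^ 2 + g t ^ 2)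
  calc ∫ s in Ioc 1 (1 + ε), s ^ 2 * (f s - radialMean ε k f) ^ 2
      ≤ ∫ s in Ioc 1 (1 + ε), 4 * B := by
        refine setIntegral_mono_on ?_ ?_ measurableSet_Ioc fun s hs => ?_
        · exact Continuous.integrableOn_Ioc (by fun_prop)
        · exact Continuous.integrableOn_Ioc continuous_const
        have hs4 : s ^ 2 ≤ 4 := by nlinarith [hs.1, hs.2]
        exact mul_le_mul hs4 (sq_sub_radialMean_le k hε hε1 hd hg (Ioc_subset_Icc_self hs))
          (sq_nonneg _) (by norm_num)
    _ = shellConst k * ε ^ 2 * ∫ s in Ioc 1 (1 + ε), (f s ^ 2 + g s ^ 2) := by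
        rw [setIntegral_const, Real.volume_real_Ioc, add_sub_cancel_left,
          max_eq_left hε.le, smul_eq_mul, shellConst]
        ring
    _ ≤ shellConst k * ε ^ 2 * ∫ s in Ioc 1 (1 + ε), s ^ 2 * (f s ^ 2 + g s ^ 2) := by
        refine mul_le_mul_of_nonneg_left
          (setIntegral_mono_on ?_ ?_ measurableSet_Ioc fun s hs => ?_) (mul_nonneg (shellConst_pos k).le (sq_nonneg ε))
        · exact Continuous.integrableOn_Ioc (by fun_prop)
        · exact Continuous.integrableOn_Ioc (by fun_prop)
        exact le_mul_of_one_le_left (by positivity) (one_le_pow₀ hs.1.le)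

end RadialMean

lemma measurableSet_shell (ε : ℝ) : MeasurableSet (shell ε) :=
  (measurableSet_lt measurable_const measurable_norm).inter
    (measurableSet_lt measurable_norm measurable_const)

lemma Continuous.integrableOn_shell {f : E3 → ℝ} (hf : Continuous f) (ε : ℝ) :
    IntegrableOn f (shell ε) :=
  (hf.continuousOn.integrableOn_compact (isCompact_closedBall 0 (1 + ε))).mono_set
    fun _ hx => mem_closedBall_zero_iff.2 hx.2.le

lemma setIntegral_Ioi_mul_indicator_shell (ε : ℝ) (n : ℕ) (G : E3 → ℝ) {y : E3} (hy : ‖y‖ = 1) :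
    ∫ r in Ioi 0, r ^ n * (shell ε).indicator G (r • y)
      = ∫ r in Ioc 1 (1 + ε), r ^ n * G (r • y) := by
  have hmem : ∀ r ∈ Ioi (0 : ℝ), r • y ∈ shell ε ↔ r ∈ Ioo 1 (1 + ε) := fun r hr => by
    simp [shell, norm_smul, hy, abs_of_pos (mem_Ioi.1 hr)]
  have hind : ∀ r ∈ Ioi (0 : ℝ), r ^ n * (shell ε).indicator G (r • y)
      = (Ioo 1 (1 + ε)).indicator (fun r => r ^ n * G (r • y)) r := fun r hr => by
    by_cases h : r ∈ Ioo 1 (1 + ε)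
    · rw [indicator_of_mem h, indicator_of_mem ((hmem r hr).2 h)]
    · rw [indicator_of_notMem h, indicator_of_notMem (mt (hmem r hr).1 h), mul_zero]
  rw [setIntegral_congr_fun measurableSet_Ioi hind, setIntegral_indicator measurableSet_Ioo,
    inter_eq_self_of_subset_right (Ioo_subset_Ioi_self.trans (Ioi_subset_Ioi zero_le_one)),
    integral_Ioc_eq_integral_Ioo]

lemma setIntegral_sq_sub_avg_le (k : ℕ) {ε : ℝ} (hε : 0 < ε) (hε1 : ε ≤ 1) {φ : E3 → ℝ}
    (hφ : ContDiff ℝ 1 φ) {y : E3} (hy : ‖y‖ = 1) :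
    ∫ r in Ioc 1 (1 + ε), r ^ 2 * (φ (r • y) - avg ε k φ y) ^ 2
      ≤ shellConst k * ε ^ 2
          * ∫ r in Ioc 1 (1 + ε), r ^ 2 * (φ (r • y) ^ 2 + ‖fderiv ℝ φ (r • y)‖ ^ 2) := by
  have hd : ∀ t : ℝ, HasDerivAt (fun r => φ (r • y)) (fderiv ℝ φ (t • y) y) t := fun t =>
    ((hφ.differentiable one_ne_zero _).hasFDerivAt).comp_hasDerivAt t
      (by simpa using (hasDerivAt_id t).smul_const y)
  have hdc : Continuous fun t : ℝ => fderiv ℝ φ (t • y) :=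
    (hφ.continuous_fderiv one_ne_zero).comp (by fun_prop)
  refine (setIntegral_sq_sub_radialMean_le k hε hε1 hd (hdc.clm_apply continuous_const)).trans ?_
  refine mul_le_mul_of_nonneg_left (setIntegral_mono_on ?_ ?_ measurableSet_Ioc fun r hr => ?_)
    (mul_nonneg (shellConst_pos k).le (sq_nonneg ε))
  · exact Continuous.integrableOn_Ioc (by fun_prop)
  · exact Continuous.integrableOn_Ioc (by fun_prop)
  have hop : |fderiv ℝ φ (r • y) y| ≤ ‖fderiv ℝ φ (r • y)‖ := by
    simpa [hy] using (fderiv ℝ φ (r • y)).le_opNorm y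
  have hsq : fderiv ℝ φ (r • y) y ^ 2 ≤ ‖fderiv ℝ φ (r • y)‖ ^ 2 :=
    sq_le_sq.2 (hop.trans (le_abs_self _))
  exact mul_le_mul_of_nonneg_left (add_le_add_right hsq _) (sq_nonneg r)

lemma radialIntegral_indicator_shell_le (k : ℕ) {ε : ℝ} (hε : 0 < ε) (hε1 : ε ≤ 1) {φ : E3 → ℝ}
    (hφ : ContDiff ℝ 1 φ) (y : sphere (0 : E3) 1) :
    radialIntegral ((shell ε).indicator fun x => (φ x - avg ε k φ (‖x‖⁻¹ • x)) ^ 2) y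
      ≤ radialIntegral ((shell ε).indicator
          fun x => shellConst k * ε ^ 2 * (φ x ^ 2 + ‖fderiv ℝ φ x‖ ^ 2)) y := by
  have hy : ‖(y : E3)‖ = 1 := norm_eq_of_mem_sphere y
  have hdim : finrank ℝ E3 - 1 = 2 := by simp
  have hproj : ∀ r ∈ Ioc (1 : ℝ) (1 + ε), ‖r • (y : E3)‖⁻¹ • r • (y : E3) = y := fun r hr => by
    rw [norm_smul, hy, mul_one, Real.norm_of_nonneg (by linarith [hr.1]), smul_smul,
      inv_mul_cancel₀ (by linarith [hr.1]), one_smul]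
  simp only [radialIntegral, hdim, setIntegral_Ioi_mul_indicator_shell ε 2 _ hy]
  calc ∫ r in Ioc 1 (1 + ε), r ^ 2 * (φ (r • y) - avg ε k φ (‖r • (y : E3)‖⁻¹ • r • (y : E3))) ^ 2
      = ∫ r in Ioc 1 (1 + ε), r ^ 2 * (φ (r • y) - avg ε k φ y) ^ 2 :=
        setIntegral_congr_fun measurableSet_Ioc fun r hr => by rw [hproj r hr]
    _ ≤ shellConst k * ε ^ 2
          * ∫ r in Ioc 1 (1 + ε), r ^ 2 * (φ (r • y) ^ 2 + ‖fderiv ℝ φ (r • y)‖ ^ 2) :=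
        setIntegral_sq_sub_avg_le k hε hε1 hφ hy
    _ = _ := by
        rw [← integral_const_mul]
        congr 1 with r
        ring

/-- `‖φ − (M_ε^k φ)⁻‖_{L²(Ω_ε)} ≤ c ε ‖φ‖_{H¹(Ω_ε)}` (squared form), `c` depending only on `k`. -/
theorem stmt15 (k : ℕ) :
    ∃ c : ℝ, 0 < c ∧ ∀ ε : ℝ, 0 < ε → ε < 1 → ∀ φ : E3 → ℝ, ContDiff ℝ 1 φ →
      (∫ x in shell ε, (φ x - avg ε k φ (‖x‖⁻¹ • x))^2)
        ≤ c * ε^2 * ((∫ x in shell ε, (φ x)^2) + ∫ x in shell ε, ‖fderiv ℝ φ x‖^2) := by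
  refine ⟨shellConst k, shellConst_pos k, fun ε hε hε1 φ hφ => ?_⟩
  have hφ₂ : IntegrableOn (fun x => φ x ^ 2) (shell ε) :=
    (hφ.continuous.pow 2).integrableOn_shell ε
  have hdφ₂ : IntegrableOn (fun x => ‖fderiv ℝ φ x‖ ^ 2) (shell ε) :=
    ((hφ.continuous_fderiv one_ne_zero).norm.pow 2).integrableOn_shell ε
  have hbound : IntegrableOn
      (fun x => shellConst k * ε ^ 2 * (φ x ^ 2 + ‖fderiv ℝ φ x‖ ^ 2)) (shell ε) :=
    (hφ₂.add hdφ₂).const_mul _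
  have hbound₀ : 0 ≤ ∫ x in shell ε, shellConst k * ε ^ 2 * (φ x ^ 2 + ‖fderiv ℝ φ x‖ ^ 2) :=
    setIntegral_nonneg (measurableSet_shell ε) fun x _ =>
      mul_nonneg (mul_nonneg (shellConst_pos k).le (sq_nonneg ε)) (by positivity)
  rw [← integral_add hφ₂ hdφ₂, ← integral_const_mul, ← integral_indicator (measurableSet_shell ε),
    ← integral_indicator (measurableSet_shell ε)]
  refine integral_le_integral_of_radialIntegral_le volume
    (hbound.integrable_indicator (measurableSet_shell ε)) ?_
    (radialIntegral_indicator_shell_le k hε hε1.le hφ)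
  rwa [integral_indicator (measurableSet_shell ε)]
end
end
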